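/- arXiv:2206.10290 — 5 statements merged into one kernel-verified Lean document; each statement's English description precedes it below -/
import Mathlib

section
/- Let A, B, C be non-negative real numbers with A + B*T ≠ 0, T > 0, τ > 0, and let {Z_n}_{n=0}^N be a non-negative sequence with Z_0 = 0 satisfying Z_n ≤ Z_{n-1} + A*τ*Z_{n-1} + B*τ²*∑_{m=1}^{n-1} Z_m + C*τ² for all 1 ≤ n ≤ N, where N*τ ≤ T. Then Z_n ≤ (C/(A+B*T))*((1 + A*τ + B*T*τ)^n − 1)*τ for all 1 ≤ n ≤ N. -/
/-!
Compare `Z` with the solution `W n = C / K * ((1 + K τ) ^ n - 1) * τ`, `K = A + B T`, of the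
affine recurrence `W (n + 1) = (1 + K τ) W n + C τ²`. Since `W` is nondecreasing and `n τ ≤ T`,
the memory term `B τ² ∑_{m ≤ n} W m` is at most `B T τ W n`, so `W` is a supersolution of the
recurrence for `Z` and dominates it by strong induction.
-/

open Finset

theorem nonneg_of_le_affine_succ {ρ c : ℝ} {W : ℕ → ℝ} (hρ : 0 ≤ ρ) (hc : 0 ≤ c)
    (hW0 : 0 ≤ W 0) (hW : ∀ n, (1 + ρ) * W n + c ≤ W (n + 1)) (n : ℕ) : 0 ≤ W n := by
  induction n with
  | zero => exact hW0
  | succ n ih => nlinarith [hW n]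

theorem monotone_of_le_affine_succ {ρ c : ℝ} {W : ℕ → ℝ} (hρ : 0 ≤ ρ) (hc : 0 ≤ c)
    (hW0 : 0 ≤ W 0) (hW : ∀ n, (1 + ρ) * W n + c ≤ W (n + 1)) : Monotone W :=
  monotone_nat_of_le_succ fun n => by
    nlinarith [hW n, nonneg_of_le_affine_succ hρ hc hW0 hW n]

theorem sum_Icc_le_mul_of_monotone {Z W : ℕ → ℝ} (hW : Monotone W) {k : ℕ}
    (hZW : ∀ m ∈ Icc 1 k, Z m ≤ W m) : ∑ m ∈ Icc 1 k, Z m ≤ k * W k :=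
  calc ∑ m ∈ Icc 1 k, Z m ≤ ∑ m ∈ Icc 1 k, W m := sum_le_sum hZW
    _ ≤ #(Icc 1 k) • W k := sum_le_card_nsmul _ _ _ fun m hm => hW (mem_Icc.1 hm).2
    _ = k * W k := by simp

theorem le_of_le_memory_recurrence {A B T τ c : ℝ} {N : ℕ} {Z W : ℕ → ℝ}
    (hA : 0 ≤ A) (hB : 0 ≤ B) (hτ : 0 ≤ τ) (hNT : (N : ℝ) * τ ≤ T) (hc : 0 ≤ c)
    (hW0 : 0 ≤ W 0) (hZW0 : Z 0 ≤ W 0)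
    (hW : ∀ n, (1 + A * τ + B * T * τ) * W n + c ≤ W (n + 1))
    (hZ : ∀ n, 1 ≤ n → n ≤ N →
      Z n ≤ Z (n - 1) + A * τ * Z (n - 1) + B * τ ^ 2 * ∑ m ∈ Icc 1 (n - 1), Z m + c) :
    ∀ n ≤ N, Z n ≤ W n := by
  have hρ : 0 ≤ A * τ + B * T * τ := by
    have hT : 0 ≤ T := (by positivity : (0 : ℝ) ≤ N * τ).trans hNT
    positivity
  have hW' : ∀ n, (1 + (A * τ + B * T * τ)) * W n + c ≤ W (n + 1) := fun n => by
    simpa only [add_assoc] using hW n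
  have hWmono := monotone_of_le_affine_succ hρ hc hW0 hW'
  intro n
  induction n using Nat.strong_induction_on with
  | _ n ih =>
    intro hnN
    match n with
    | 0 => exact hZW0
    | k + 1 =>
      have hZk : Z k ≤ W k := ih k k.lt_succ_self (by omega)
      have hsum : ∑ m ∈ Icc 1 k, Z m ≤ k * W k :=
        sum_Icc_le_mul_of_monotone hWmono fun m hm => ih m (by grind) (by grind)
      have hkT : (k : ℝ) * τ ≤ T :=
        le_trans (by gcongr; exact_mod_cast k.le_succ.trans hnN) hNT
      have hWk := nonneg_of_le_affine_succ hρ hc hW0 hW' k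
      calc Z (k + 1)
          ≤ Z k + A * τ * Z k + B * τ ^ 2 * ∑ m ∈ Icc 1 k, Z m + c := hZ (k + 1) (by omega) hnN
        _ ≤ W k + A * τ * W k + B * τ ^ 2 * (k * W k) + c := by gcongr
        _ = W k + A * τ * W k + B * τ * W k * (k * τ) + c := by ring
        _ ≤ W k + A * τ * W k + B * τ * W k * T + c := by gcongr
        _ = (1 + A * τ + B * T * τ) * W k + c := by ring
        _ ≤ W (k + 1) := hW k

theorem geometric_affine_recurrence {K : ℝ} (hK : K ≠ 0) (C τ : ℝ) (n : ℕ) :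
    C / K * ((1 + K * τ) ^ (n + 1) - 1) * τ
      = (1 + K * τ) * (C / K * ((1 + K * τ) ^ n - 1) * τ) + C * τ ^ 2 := by
  field_simp
  ring

theorem discrete_gronwall_geometric_general
    (A B C T τ : ℝ) (N : ℕ) (Z : ℕ → ℝ)
    (hA : 0 ≤ A) (hB : 0 ≤ B) (hC : 0 ≤ C)
    (hABT : A + B * T ≠ 0) (hτ : 0 < τ)
    (hNT : (N : ℝ) * τ ≤ T)
    (hZ0 : Z 0 = 0)
    (hrec : ∀ n, 1 ≤ n → n ≤ N →
      Z n ≤ Z (n - 1) + A * τ * Z (n - 1)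
        + B * τ ^ 2 * ∑ m ∈ Finset.Icc 1 (n - 1), Z m + C * τ ^ 2) :
    ∀ n, 1 ≤ n → n ≤ N →
      Z n ≤ C / (A + B * T) * ((1 + A * τ + B * T * τ) ^ n - 1) * τ := by
  have hr : 1 + A * τ + B * T * τ = 1 + (A + B * T) * τ := by ring
  intro n _ hnN
  rw [hr]
  refine le_of_le_memory_recurrence
    (W := fun k => C / (A + B * T) * ((1 + (A + B * T) * τ) ^ k - 1) * τ)
    hA hB hτ.le hNT (by positivity) (by simp) (by simp [hZ0]) (fun k => ?_) hrec n hnN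
  rw [hr]
  exact (geometric_affine_recurrence hABT C τ k).ge

theorem discrete_gronwall_geometric
    (A B C T τ : ℝ) (N : ℕ) (Z : ℕ → ℝ)
    (hA : 0 ≤ A) (hB : 0 ≤ B) (hC : 0 ≤ C)
    (hABT : A + B * T ≠ 0) (hT : 0 < T) (hτ : 0 < τ)
    (hNT : (N : ℝ) * τ ≤ T)
    (hZ0 : Z 0 = 0) (hZnonneg : ∀ n, 0 ≤ Z n)
    (hrec : ∀ n, 1 ≤ n → n ≤ N →
      Z n ≤ Z (n - 1) + A * τ * Z (n - 1)
        + B * τ ^ 2 * ∑ m ∈ Finset.Icc 1 (n - 1), Z m + C * τ ^ 2) :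
    ∀ n, 1 ≤ n → n ≤ N →
      Z n ≤ C / (A + B * T) * ((1 + A * τ + B * T * τ) ^ n - 1) * τ :=
  discrete_gronwall_geometric_general A B C T τ N Z hA hB hC hABT hτ hNT hZ0 hrec
end

section
/- Let A, B, C be non-negative real numbers with A + B*T ≠ 0, T > 0, τ > 0, N*τ ≤ T, and let {Z_n}_{n=0}^N be a non-negative sequence with Z_0 = 0 satisfying Z_n ≤ Z_{n-1} + A*τ*Z_{n-1} + B*τ²*∑_{m=1}^{n-1} Z_m + C*τ² for all 1 ≤ n ≤ N. Then Z_n ≤ (C/(A+B*T))*(exp((A+B*T)*T) − 1)*τ for all 1 ≤ n ≤ N. -/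
/-!
By strong induction, `Z n ≤ K * (q ^ n - 1)` with `q = 1 + (A + B T) τ` and `K = C τ / (A + B T)`.
The bound is increasing in `n`, so the memory term `B τ² ∑_{m=1}^{k} Z m` of the step `k → k + 1`
is at most `B τ (k τ) K (q ^ k - 1) ≤ B T τ K (q ^ k - 1)` and is absorbed into the growth factor `q`,
while `C τ² = K (A + B T) τ` is exactly what turns `q K (q ^ k - 1)` into `K (q ^ (k + 1) - 1)`.
Finally `q ^ n ≤ exp ((A + B T) τ) ^ n ≤ exp ((A + B T) T)` since `n τ ≤ T`.
-/

open Finset Real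

theorem one_add_mul_pow_le_exp {a τ T : ℝ} {n : ℕ} (ha : 0 ≤ a) (hτ : 0 ≤ τ)
    (hn : n * τ ≤ T) : (1 + a * τ) ^ n ≤ exp (a * T) :=
  calc (1 + a * τ) ^ n ≤ exp (a * τ) ^ n :=
        pow_le_pow_left₀ (by positivity) (by linarith [add_one_le_exp (a * τ)]) n
    _ = exp (a * (n * τ)) := by rw [← exp_nat_mul]; ring_nf
    _ ≤ exp (a * T) := by gcongr

section Gronwall

variable {A B C T τ : ℝ} {Z : ℕ → ℝ}

theorem gronwall_step_le {M : ℝ} {k : ℕ} (hA : 0 ≤ A) (hB : 0 ≤ B) (hτ : 0 ≤ τ)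
    (hkT : k * τ ≤ T) (hM : 0 ≤ M) (hZ : ∀ m ≤ k, Z m ≤ M)
    (hrec : Z (k + 1) ≤ Z k + A * τ * Z k + B * τ ^ 2 * ∑ m ∈ Icc 1 k, Z m + C * τ ^ 2) :
    Z (k + 1) ≤ (1 + (A + B * T) * τ) * M + C * τ ^ 2 := by
  have hsum : ∑ m ∈ Icc 1 k, Z m ≤ k * M := by
    simpa using sum_le_card_nsmul (Icc 1 k) Z M fun m hm => hZ m (mem_Icc.1 hm).2
  have hmemory : B * τ ^ 2 * ∑ m ∈ Icc 1 k, Z m ≤ B * T * τ * M :=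
    calc B * τ ^ 2 * ∑ m ∈ Icc 1 k, Z m ≤ B * τ ^ 2 * (k * M) := by gcongr
      _ = B * τ * (k * τ) * M := by ring
      _ ≤ B * τ * T * M := by gcongr
      _ = B * T * τ * M := by ring
  have hlast : Z k + A * τ * Z k ≤ M + A * τ * M := by
    have := hZ k le_rfl
    gcongr
  linarith

theorem le_geometric_of_gronwall_rec {N : ℕ} (hA : 0 ≤ A) (hB : 0 ≤ B) (hC : 0 ≤ C)
    (hτ : 0 ≤ τ) (hD : 0 < A + B * T) (hNT : (N : ℝ) * τ ≤ T) (hZ0 : Z 0 ≤ 0)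
    (hrec : ∀ n, 1 ≤ n → n ≤ N →
      Z n ≤ Z (n - 1) + A * τ * Z (n - 1)
        + B * τ ^ 2 * ∑ m ∈ Icc 1 (n - 1), Z m + C * τ ^ 2) :
    ∀ n ≤ N, Z n ≤ C * τ / (A + B * T) * ((1 + (A + B * T) * τ) ^ n - 1) := by
  set q := 1 + (A + B * T) * τ
  set K := C * τ / (A + B * T)
  have hq : 1 ≤ q := by simp only [q]; nlinarith
  have hK : 0 ≤ K := by positivity
  intro n
  induction n using Nat.strong_induction_on with
  | _ n ih =>
    intro hnN
    cases n with
    | zero => simpa using hZ0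
    | succ k =>
      have hkT : (k : ℝ) * τ ≤ T := by
        have : (k : ℝ) ≤ N := by exact_mod_cast (Nat.le_succ k).trans hnN
        nlinarith
      have hbound : ∀ m ≤ k, Z m ≤ K * (q ^ k - 1) := fun m hm =>
        (ih m (by omega) (by omega)).trans (by gcongr)
      calc Z (k + 1) ≤ q * (K * (q ^ k - 1)) + C * τ ^ 2 :=
            gronwall_step_le hA hB hτ hkT (by have := one_le_pow₀ (n := k) hq; positivity)
              hbound (by simpa using hrec (k + 1) (by omega) hnN)
        _ = K * (q ^ (k + 1) - 1) := by simp only [q, K]; field_simp; ring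

end Gronwall

theorem discrete_gronwall_exponential_general
    (A B C T τ : ℝ) (N : ℕ) (Z : ℕ → ℝ)
    (hA : 0 ≤ A) (hB : 0 ≤ B) (hC : 0 ≤ C)
    (hABT : A + B * T ≠ 0) (hτ : 0 < τ)
    (hNT : (N : ℝ) * τ ≤ T)
    (hZ0 : Z 0 = 0)
    (hrec : ∀ n, 1 ≤ n → n ≤ N →
      Z n ≤ Z (n - 1) + A * τ * Z (n - 1)
        + B * τ ^ 2 * ∑ m ∈ Finset.Icc 1 (n - 1), Z m + C * τ ^ 2) :
    ∀ n, 1 ≤ n → n ≤ N →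
      Z n ≤ C / (A + B * T) * (Real.exp ((A + B * T) * T) - 1) * τ := by
  intro n _ hnN
  have hT : 0 ≤ T := (by positivity : 0 ≤ (N : ℝ) * τ).trans hNT
  have hD : 0 < A + B * T := lt_of_le_of_ne (by positivity) hABT.symm
  have hnT : (n : ℝ) * τ ≤ T := by
    have : (n : ℝ) ≤ N := by exact_mod_cast hnN
    nlinarith
  calc Z n ≤ C * τ / (A + B * T) * ((1 + (A + B * T) * τ) ^ n - 1) :=
        le_geometric_of_gronwall_rec hA hB hC hτ.le hD hNT hZ0.le hrec n hnN
    _ ≤ C * τ / (A + B * T) * (exp ((A + B * T) * T) - 1) := by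
        gcongr
        exact one_add_mul_pow_le_exp hD.le hτ.le hnT
    _ = C / (A + B * T) * (exp ((A + B * T) * T) - 1) * τ := by ring

theorem discrete_gronwall_exponential
    (A B C T τ : ℝ) (N : ℕ) (Z : ℕ → ℝ)
    (hA : 0 ≤ A) (hB : 0 ≤ B) (hC : 0 ≤ C)
    (hABT : A + B * T ≠ 0) (hT : 0 < T) (hτ : 0 < τ)
    (hNT : (N : ℝ) * τ ≤ T)
    (hZ0 : Z 0 = 0) (hZnonneg : ∀ n, 0 ≤ Z n)
    (hrec : ∀ n, 1 ≤ n → n ≤ N →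
      Z n ≤ Z (n - 1) + A * τ * Z (n - 1)
        + B * τ ^ 2 * ∑ m ∈ Finset.Icc 1 (n - 1), Z m + C * τ ^ 2) :
    ∀ n, 1 ≤ n → n ≤ N →
      Z n ≤ C / (A + B * T) * (Real.exp ((A + B * T) * T) - 1) * τ :=
  discrete_gronwall_exponential_general A B C T τ N Z hA hB hC hABT hτ hNT hZ0 hrec
end

section
/- Let x ∈ ℝ^d with ‖x‖ = 1, let v_1, ..., v_k ∈ ℝ^d be orthonormal with v_jᵀ x = 0 for all j, let F ∈ ℝ^d with ‖F‖ ≤ L₂, and let α, τ > 0. Define x̃ = x + τ*α*(I − x xᵀ − 2∑_{j=1}^k v_j v_jᵀ) F. Then xᵀ x̃ = 1, ‖x̃ − x‖ ≤ 2*τ*α*L₂, and |‖x̃‖² − 1| ≤ τ*α*L₂*‖x̃ − x‖; consequently |‖x̃‖ − 1| ≤ 2*α²*L₂²*τ². -/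
/-!
The direction `w = F - ⟪x, F⟫ x - 2 ∑ⱼ ⟪vⱼ, F⟫ vⱼ` is orthogonal to `x`, and it is the tangential
part `F - ⟪x, F⟫ x` of `F` reflected in the span of the `vⱼ`, so `‖w‖² = ‖F‖² - ⟪x, F⟫² ≤ L₂²`.
Since `x̃ = x + τα w` with `w ⟂ x` and `‖x‖ = 1`, Pythagoras gives `‖x̃‖² = 1 + ‖x̃ - x‖²`; hence
`‖x̃‖ ≥ 1` and `0 ≤ ‖x̃‖ - 1 ≤ ‖x̃‖² - 1 = ‖x̃ - x‖² ≤ (ταL₂)²`.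
-/

open RealInnerProductSpace

variable {E : Type*} [NormedAddCommGroup E] [InnerProductSpace ℝ E]

section UnitVector

variable {x w : E}

lemma inner_add_eq_one_of_inner_eq_zero (hx : ‖x‖ = 1) (hw : ⟪x, w⟫ = 0) : ⟪x, x + w⟫ = 1 := by
  rw [inner_add_right, hw, real_inner_self_eq_norm_sq, hx]
  norm_num

lemma norm_add_sq_eq_one_add_of_inner_eq_zero (hx : ‖x‖ = 1) (hw : ⟪x, w⟫ = 0) :
    ‖x + w‖ ^ 2 = 1 + ‖w‖ ^ 2 := by
  rw [sq, sq, norm_add_sq_eq_norm_sq_add_norm_sq_real hw, hx, one_mul]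

lemma abs_norm_add_sub_one_le_of_inner_eq_zero (hx : ‖x‖ = 1) (hw : ⟪x, w⟫ = 0) :
    |‖x + w‖ - 1| ≤ ‖w‖ ^ 2 := by
  have hsq := norm_add_sq_eq_one_add_of_inner_eq_zero hx hw
  have hone : 1 ≤ ‖x + w‖ := by nlinarith [norm_nonneg (x + w), sq_nonneg ‖w‖]
  rw [abs_of_nonneg (sub_nonneg.mpr hone)]
  nlinarith

end UnitVector

section SaddleDirection

variable {ι : Type*} [Fintype ι] {v : ι → E}

def saddleDirection (x : E) (v : ι → E) (F : E) : E :=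
  F - ⟪x, F⟫ • x - (2 : ℝ) • ∑ j, ⟪v j, F⟫ • v j

lemma Orthonormal.inner_sum_inner_smul (hv : Orthonormal ℝ v) (F : E) :
    ⟪F, ∑ j, ⟪v j, F⟫ • v j⟫ = ‖∑ j, ⟪v j, F⟫ • v j‖ ^ 2 := by
  rw [← real_inner_self_eq_norm_sq, hv.inner_sum, inner_sum]
  refine Finset.sum_congr rfl fun j _ => ?_
  rw [real_inner_smul_right, real_inner_comm, conj_trivial]

lemma inner_sum_inner_smul_eq_zero {x : E} (hvx : ∀ j, ⟪v j, x⟫ = 0) (F : E) :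
    ⟪x, ∑ j, ⟪v j, F⟫ • v j⟫ = 0 := by
  rw [inner_sum]
  refine Finset.sum_eq_zero fun j _ => ?_
  rw [real_inner_smul_right, real_inner_comm (v j) x, hvx j, mul_zero]

variable {x : E} (hx : ‖x‖ = 1) (hvx : ∀ j, ⟪v j, x⟫ = 0) (F : E)
include hx hvx

lemma inner_saddleDirection_eq_zero : ⟪x, saddleDirection x v F⟫ = 0 := by
  have hxx : ⟪x, x⟫ = 1 := by rw [real_inner_self_eq_norm_sq, hx, one_pow]
  simp only [saddleDirection, inner_sub_right, real_inner_smul_right, hxx,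
    inner_sum_inner_smul_eq_zero hvx]
  ring

lemma norm_saddleDirection_sq (hv : Orthonormal ℝ v) :
    ‖saddleDirection x v F‖ ^ 2 = ‖F‖ ^ 2 - ⟪x, F⟫ ^ 2 := by
  set s := ∑ j, ⟪v j, F⟫ • v j with hs
  have hxs : ⟪x, s⟫ = 0 := inner_sum_inner_smul_eq_zero hvx F
  have hFs : ⟪F, s⟫ = ‖s‖ ^ 2 := hv.inner_sum_inner_smul F
  rw [saddleDirection, ← hs, ← real_inner_self_eq_norm_sq]
  simp only [inner_sub_left, inner_sub_right, real_inner_smul_left, real_inner_smul_right,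
    real_inner_comm x F, real_inner_comm x s, real_inner_comm F s, hxs, hFs,
    real_inner_self_eq_norm_sq, norm_smul, mul_pow, Real.norm_eq_abs, sq_abs, hx]
  ring

lemma norm_saddleDirection_le (hv : Orthonormal ℝ v) : ‖saddleDirection x v F‖ ≤ ‖F‖ :=
  sq_le_sq₀ (norm_nonneg _) (norm_nonneg _) |>.mp <| by
    rw [norm_saddleDirection_sq hx hvx F hv]
    nlinarith [sq_nonneg ⟪x, F⟫]

end SaddleDirection

theorem euler_step_near_sphere
    (d k : ℕ) (x F : EuclideanSpace ℝ (Fin d))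
    (v : Fin k → EuclideanSpace ℝ (Fin d))
    (L₂ α τ : ℝ)
    (hx : ‖x‖ = 1) (hv : Orthonormal ℝ v)
    (hvx : ∀ j, ⟪v j, x⟫ = 0)
    (hF : ‖F‖ ≤ L₂) (hα : 0 < α) (hτ : 0 < τ)
    (xt : EuclideanSpace ℝ (Fin d))
    (hxt : xt = x + (τ * α) • (F - ⟪x, F⟫ • x - (2 : ℝ) • ∑ j, ⟪v j, F⟫ • v j)) :
    ⟪x, xt⟫ = 1 ∧ ‖xt - x‖ ≤ 2 * τ * α * L₂ ∧
      |‖xt‖ ^ 2 - 1| ≤ τ * α * L₂ * ‖xt - x‖ ∧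
      |‖xt‖ - 1| ≤ 2 * α ^ 2 * L₂ ^ 2 * τ ^ 2 := by
  set w := (τ * α) • saddleDirection x v F
  have hxt' : xt = x + w := hxt
  have hstep : xt - x = w := by rw [hxt', add_sub_cancel_left]
  have hτα : 0 ≤ τ * α := (mul_pos hτ hα).le
  have hxw : ⟪x, w⟫ = 0 := by
    rw [real_inner_smul_right, inner_saddleDirection_eq_zero hx hvx, mul_zero]
  have hw : ‖w‖ ≤ τ * α * L₂ := by
    rw [norm_smul, Real.norm_of_nonneg hτα]
    exact mul_le_mul_of_nonneg_left ((norm_saddleDirection_le hx hvx F hv).trans hF) hτα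
  have hL : 0 ≤ τ * α * L₂ := (norm_nonneg w).trans hw
  rw [hstep, hxt']
  refine ⟨inner_add_eq_one_of_inner_eq_zero hx hxw, by linarith, ?_, ?_⟩
  · rw [norm_add_sq_eq_one_add_of_inner_eq_zero hx hxw, add_sub_cancel_left,
      abs_of_nonneg (sq_nonneg _), sq]
    exact mul_le_mul_of_nonneg_right hw (norm_nonneg w)
  · calc |‖x + w‖ - 1| ≤ ‖w‖ ^ 2 := abs_norm_add_sub_one_le_of_inner_eq_zero hx hxw
      _ ≤ (τ * α * L₂) ^ 2 := pow_le_pow_left₀ (norm_nonneg w) hw 2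
      _ ≤ 2 * α ^ 2 * L₂ ^ 2 * τ ^ 2 := by nlinarith [sq_nonneg (τ * α * L₂)]
end

section
/- Fix G > M > 0. Suppose τ > 0 satisfies (M + τ²G²)/(1 − Mτ² − G²τ⁴)^{1/2} ≤ G (with 1 − Mτ² − G²τ⁴ > 0). Suppose vectors v̂_1, ..., v̂_k ∈ ℝ^d satisfy |v̂_mᵀ v̂_i| ≤ M·τ²/k² for m < i and |‖v̂_i‖² − 1| ≤ M·τ²/k² for all i, and define v_1, ..., v_k by the Gram–Schmidt recursion v_i = (1/Y_i)(v̂_i − ∑_{j<i}(v̂_iᵀ v_j) v_j) with Y_i = (‖v̂_i‖² − ∑_{j<i}(v̂_iᵀ v_j)²)^{1/2}. Then |v̂_iᵀ v_m| ≤ G·τ²/k² for all 1 ≤ m < i ≤ k. -/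
/-! Strong induction on `m`. If every `v_j` with `j < m` has inner product at most `δ` with
all later `v̂_i`, then the Gram–Schmidt denominator `Y_m` is at least `√(1 - ε - k δ²)`, while
the numerator `v̂_iᵀ v̂_m - ∑_{j<m} (v̂_mᵀ v_j)(v̂_iᵀ v_j)` of `v̂_iᵀ v_m` is at most `ε + k δ²`.
For `ε = Mτ²/k²` and `δ = Gτ²/k²` the hypothesis on `τ` makes the quotient at most `δ`
again. -/

open RealInnerProductSpace Finset

theorem abs_sum_mul_le_card_mul_sq {ι : Type*} (s : Finset ι) (a b : ι → ℝ) (δ : ℝ)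
    (ha : ∀ j ∈ s, |a j| ≤ δ) (hb : ∀ j ∈ s, |b j| ≤ δ) :
    |∑ j ∈ s, a j * b j| ≤ #s * δ ^ 2 :=
  calc |∑ j ∈ s, a j * b j|
      ≤ ∑ j ∈ s, |a j * b j| := abs_sum_le_sum_abs _ _
    _ ≤ ∑ _j ∈ s, δ ^ 2 := sum_le_sum fun j hj => by
        rw [abs_mul, sq]
        exact mul_le_mul (ha j hj) (hb j hj) (abs_nonneg _) ((abs_nonneg _).trans (ha j hj))
    _ = #s * δ ^ 2 := by rw [sum_const, nsmul_eq_mul]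

section GramSchmidt

variable {E : Type*} [NormedAddCommGroup E] [InnerProductSpace ℝ E]

theorem inner_eq_of_eq_smul_sub_sum {ι : Type*} (s : Finset ι) (x u w : E) (v : ι → E)
    (Y : ℝ) (hw : w = Y⁻¹ • (u - ∑ j ∈ s, ⟪u, v j⟫ • v j)) :
    ⟪x, w⟫ = (⟪x, u⟫ - ∑ j ∈ s, ⟪u, v j⟫ * ⟪x, v j⟫) / Y := by
  rw [hw, real_inner_smul_right, inner_sub_right, inner_sum, div_eq_inv_mul]
  simp only [real_inner_smul_right]

theorem abs_inner_gramSchmidt_le {k : ℕ} (vh v : Fin k → E) (Y : Fin k → ℝ) (ε δ D : ℝ)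
    (hD : 0 < D)
    (hinner : ∀ m i : Fin k, m < i → |⟪vh m, vh i⟫| ≤ ε)
    (hnorm : ∀ i : Fin k, 1 - ε ≤ ‖vh i‖ ^ 2)
    (hYdef : ∀ i : Fin k, Y i = √(‖vh i‖ ^ 2 - ∑ j ∈ Iio i, ⟪vh i, v j⟫ ^ 2))
    (hvdef : ∀ i : Fin k, v i = (Y i)⁻¹ • (vh i - ∑ j ∈ Iio i, ⟪vh i, v j⟫ • v j))
    (hDY : D ≤ √(1 - ε - k * δ ^ 2)) (hδ : (ε + k * δ ^ 2) / D ≤ δ) :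
    ∀ m i : Fin k, m < i → |⟪vh i, v m⟫| ≤ δ := by
  intro m
  induction m using WellFoundedLT.induction with
  | _ m ih =>
  intro i hmi
  have hm : ∀ j ∈ Iio m, |⟪vh m, v j⟫| ≤ δ := fun j hj =>
    ih j (mem_Iio.1 hj) m (mem_Iio.1 hj)
  have hi : ∀ j ∈ Iio m, |⟪vh i, v j⟫| ≤ δ := fun j hj =>
    ih j (mem_Iio.1 hj) i ((mem_Iio.1 hj).trans hmi)
  have hcard : (#(Iio m) : ℝ) * δ ^ 2 ≤ k * δ ^ 2 := by
    gcongr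
    exact (card_le_univ _).trans (card_fin k).le
  have hsq : ∑ j ∈ Iio m, ⟪vh m, v j⟫ ^ 2 ≤ k * δ ^ 2 := by
    simp only [sq ⟪vh m, _⟫]
    exact (le_abs_self _).trans ((abs_sum_mul_le_card_mul_sq _ _ _ δ hm hm).trans hcard)
  have hY : D ≤ Y m := by
    rw [hYdef m]
    exact hDY.trans (Real.sqrt_le_sqrt (by linarith [hnorm m]))
  have hnum : |⟪vh i, vh m⟫ - ∑ j ∈ Iio m, ⟪vh m, v j⟫ * ⟪vh i, v j⟫| ≤ ε + k * δ ^ 2 := by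
    refine (abs_sub _ _).trans (add_le_add ?_ ?_)
    · exact real_inner_comm (vh m) (vh i) ▸ hinner m i hmi
    · exact (abs_sum_mul_le_card_mul_sq _ _ _ δ hm hi).trans hcard
  rw [inner_eq_of_eq_smul_sub_sum _ _ _ _ _ _ (hvdef m), abs_div,
    abs_of_pos (hD.trans_le hY)]
  exact (div_le_div₀ ((abs_nonneg _).trans hnum) hnum hD hY).trans hδ

end GramSchmidt

theorem gram_schmidt_near_orthogonality_propagation_general
    (d k : ℕ) (G M τ : ℝ)
    (hM : 0 < M)
    (hden : 0 < 1 - M * τ ^ 2 - G ^ 2 * τ ^ 4)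
    (hτG : (M + τ ^ 2 * G ^ 2) / Real.sqrt (1 - M * τ ^ 2 - G ^ 2 * τ ^ 4) ≤ G)
    (vh v : Fin k → EuclideanSpace ℝ (Fin d)) (Y : Fin k → ℝ)
    (hinner : ∀ m i : Fin k, m < i → |⟪vh m, vh i⟫| ≤ M * τ ^ 2 / (k : ℝ) ^ 2)
    (hnorm : ∀ i : Fin k, |‖vh i‖ ^ 2 - 1| ≤ M * τ ^ 2 / (k : ℝ) ^ 2)
    (hYdef : ∀ i : Fin k,
      Y i = Real.sqrt (‖vh i‖ ^ 2 - ∑ j ∈ Finset.Iio i, ⟪vh i, v j⟫ ^ 2))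
    (hvdef : ∀ i : Fin k,
      v i = (Y i)⁻¹ • (vh i - ∑ j ∈ Finset.Iio i, ⟪vh i, v j⟫ • v j)) :
    ∀ m i : Fin k, m < i → |⟪vh i, v m⟫| ≤ G * τ ^ 2 / (k : ℝ) ^ 2 := by
  intro m
  have hk : (1 : ℝ) ≤ k := by exact_mod_cast m.pos
  set D := √(1 - M * τ ^ 2 - G ^ 2 * τ ^ 4)
  have hnum : M * τ ^ 2 / k ^ 2 + k * (G * τ ^ 2 / k ^ 2) ^ 2 ≤
      (M + τ ^ 2 * G ^ 2) * (τ ^ 2 / k ^ 2) := by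
    have hcross : k * (G * τ ^ 2 / k ^ 2) ^ 2 = τ ^ 2 * G ^ 2 * (τ ^ 2 / k ^ 2) / k := by
      field_simp
    rw [hcross, mul_div_assoc, add_mul]
    gcongr
    exact div_le_self (by positivity) hk
  have hnum_le : (M + τ ^ 2 * G ^ 2) * (τ ^ 2 / k ^ 2) ≤ M * τ ^ 2 + G ^ 2 * τ ^ 4 :=
    calc _ ≤ (M + τ ^ 2 * G ^ 2) * τ ^ 2 := by
          gcongr
          exact div_le_self (sq_nonneg τ) (one_le_pow₀ hk)
      _ = _ := by ring
  refine abs_inner_gramSchmidt_le vh v Y _ _ D (Real.sqrt_pos.2 hden) hinner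
    (fun i => by linarith [(abs_le.1 (hnorm i)).1]) hYdef hvdef
    (Real.sqrt_le_sqrt (by linarith)) ?_ m
  calc (M * τ ^ 2 / k ^ 2 + k * (G * τ ^ 2 / k ^ 2) ^ 2) / D
      ≤ (M + τ ^ 2 * G ^ 2) / D * (τ ^ 2 / k ^ 2) := by
        rw [div_mul_eq_mul_div]
        exact div_le_div_of_nonneg_right hnum (Real.sqrt_nonneg _)
    _ ≤ G * τ ^ 2 / k ^ 2 := by
        rw [mul_div_assoc]
        exact mul_le_mul_of_nonneg_right hτG (by positivity)

theorem gram_schmidt_near_orthogonality_propagation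
    (d k : ℕ) (G M τ : ℝ)
    (hGM : M < G) (hM : 0 < M) (hτ : 0 < τ)
    (hden : 0 < 1 - M * τ ^ 2 - G ^ 2 * τ ^ 4)
    (hτG : (M + τ ^ 2 * G ^ 2) / Real.sqrt (1 - M * τ ^ 2 - G ^ 2 * τ ^ 4) ≤ G)
    (vh v : Fin k → EuclideanSpace ℝ (Fin d)) (Y : Fin k → ℝ)
    (hinner : ∀ m i : Fin k, m < i → |⟪vh m, vh i⟫| ≤ M * τ ^ 2 / (k : ℝ) ^ 2)
    (hnorm : ∀ i : Fin k, |‖vh i‖ ^ 2 - 1| ≤ M * τ ^ 2 / (k : ℝ) ^ 2)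
    (hYdef : ∀ i : Fin k,
      Y i = Real.sqrt (‖vh i‖ ^ 2 - ∑ j ∈ Finset.Iio i, ⟪vh i, v j⟫ ^ 2))
    (hvdef : ∀ i : Fin k,
      v i = (Y i)⁻¹ • (vh i - ∑ j ∈ Finset.Iio i, ⟪vh i, v j⟫ • v j)) :
    ∀ m i : Fin k, m < i → |⟪vh i, v m⟫| ≤ G * τ ^ 2 / (k : ℝ) ^ 2 :=
  gram_schmidt_near_orthogonality_propagation_general d k G M τ hM hden hτG vh v Y hinner hnorm
    hYdef hvdef
end

section
/- Let F: ℝ^d → ℝ^d be Lipschitz with constant L₁ on the unit sphere and bounded by L₂ on the unit sphere, and let x, x' ∈ S^{d−1}, v_1,...,v_k, v'_1,...,v'_k ∈ ℝ^d with each family orthonormal. Then ‖∑_{j=1}^k (v_j v_jᵀ F(x) − v'_j (v'_j)ᵀ F(x'))‖ ≤ L₂·∑_{j=1}^k (‖v_j − v'_j‖·‖v_j‖ + ‖v'_j‖·‖v_j − v'_j‖) + L₁·‖x − x'‖, where the last term's constant is independent of k. -/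
/-!
Subtracting and adding `∑ⱼ ⟪v'ⱼ, F x⟫ • v'ⱼ` splits the difference into a change of the projection
at the fixed force `F x`, bounded termwise by Cauchy–Schwarz and `‖F x‖ ≤ L₂`, and the projection of
`F x - F x'` onto the span of the orthonormal `v'ⱼ`, which by Bessel's inequality has norm at most
`‖F x - F x'‖ ≤ L₁ ‖x - x'‖`, whatever `k` is.
-/

open RealInnerProductSpace

variable {E : Type*} [NormedAddCommGroup E] [InnerProductSpace ℝ E]

theorem Orthonormal.norm_sum_inner_smul_le {ι : Type*} [Fintype ι] {v : ι → E}
    (hv : Orthonormal ℝ v) (w : E) :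
    ‖∑ j, ⟪v j, w⟫ • v j‖ ≤ ‖w‖ := by
  have hnorm_sq : ‖∑ j, ⟪v j, w⟫ • v j‖ ^ 2 = ∑ j, ‖⟪v j, w⟫‖ ^ 2 := by
    rw [← real_inner_self_eq_norm_sq, hv.inner_sum]
    simp only [conj_trivial, Real.norm_eq_abs, sq_abs, ← sq]
  refine le_of_sq_le_sq ?_ (norm_nonneg w)
  rw [hnorm_sq]
  exact hv.sum_inner_products_le w

theorem norm_inner_smul_sub_inner_smul_le (u u' f : E) :
    ‖⟪u, f⟫ • u - ⟪u', f⟫ • u'‖ ≤ ‖f‖ * (‖u - u'‖ * ‖u‖ + ‖u'‖ * ‖u - u'‖) := by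
  have hsplit : ⟪u, f⟫ • u - ⟪u', f⟫ • u' = ⟪u - u', f⟫ • u + ⟪u', f⟫ • (u - u') := by
    simp only [inner_sub_left, sub_smul, smul_sub]
    abel
  rw [hsplit]
  calc ‖⟪u - u', f⟫ • u + ⟪u', f⟫ • (u - u')‖
      ≤ ‖⟪u - u', f⟫‖ * ‖u‖ + ‖⟪u', f⟫‖ * ‖u - u'‖ := by
        simpa only [norm_smul] using norm_add_le (⟪u - u', f⟫ • u) (⟪u', f⟫ • (u - u'))
    _ ≤ ‖u - u'‖ * ‖f‖ * ‖u‖ + ‖u'‖ * ‖f‖ * ‖u - u'‖ := by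
        gcongr <;> exact norm_inner_le_norm _ _
    _ = ‖f‖ * (‖u - u'‖ * ‖u‖ + ‖u'‖ * ‖u - u'‖) := by ring

theorem projected_force_stability_general
    (d k : ℕ) (L₁ L₂ : ℝ)
    (F : EuclideanSpace ℝ (Fin d) → EuclideanSpace ℝ (Fin d))
    (hLip : ∀ y y' : EuclideanSpace ℝ (Fin d), ‖y‖ = 1 → ‖y'‖ = 1 →
      ‖F y - F y'‖ ≤ L₁ * ‖y - y'‖)
    (hbd : ∀ y : EuclideanSpace ℝ (Fin d), ‖y‖ = 1 → ‖F y‖ ≤ L₂)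
    (x x' : EuclideanSpace ℝ (Fin d)) (hx : ‖x‖ = 1) (hx' : ‖x'‖ = 1)
    (v v' : Fin k → EuclideanSpace ℝ (Fin d))
    (hv' : Orthonormal ℝ v') :
    ‖∑ j, (⟪v j, F x⟫ • v j - ⟪v' j, F x'⟫ • v' j)‖
      ≤ L₂ * ∑ j, (‖v j - v' j‖ * ‖v j‖ + ‖v' j‖ * ‖v j - v' j‖)
        + L₁ * ‖x - x'‖ := by
  have hsplit : ∑ j, (⟪v j, F x⟫ • v j - ⟪v' j, F x'⟫ • v' j)
      = ∑ j, (⟪v j, F x⟫ • v j - ⟪v' j, F x⟫ • v' j) + ∑ j, ⟪v' j, F x - F x'⟫ • v' j := by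
    rw [← Finset.sum_add_distrib]
    simp only [inner_sub_right, sub_smul, sub_add_sub_cancel]
  calc ‖∑ j, (⟪v j, F x⟫ • v j - ⟪v' j, F x'⟫ • v' j)‖
      ≤ ∑ j, ‖⟪v j, F x⟫ • v j - ⟪v' j, F x⟫ • v' j‖ + ‖F x - F x'‖ := by
        rw [hsplit]
        exact (norm_add_le _ _).trans
          (add_le_add (norm_sum_le _ _) (hv'.norm_sum_inner_smul_le _))
    _ ≤ ∑ j, L₂ * (‖v j - v' j‖ * ‖v j‖ + ‖v' j‖ * ‖v j - v' j‖) + L₁ * ‖x - x'‖ := by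
        gcongr with j
        · exact (norm_inner_smul_sub_inner_smul_le _ _ _).trans
            (mul_le_mul_of_nonneg_right (hbd x hx) (by positivity))
        · exact hLip x x' hx hx'
    _ = L₂ * ∑ j, (‖v j - v' j‖ * ‖v j‖ + ‖v' j‖ * ‖v j - v' j‖) + L₁ * ‖x - x'‖ := by
        rw [Finset.mul_sum]

theorem projected_force_stability
    (d k : ℕ) (L₁ L₂ : ℝ)
    (F : EuclideanSpace ℝ (Fin d) → EuclideanSpace ℝ (Fin d))
    (hLip : ∀ y y' : EuclideanSpace ℝ (Fin d), ‖y‖ = 1 → ‖y'‖ = 1 →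
      ‖F y - F y'‖ ≤ L₁ * ‖y - y'‖)
    (hbd : ∀ y : EuclideanSpace ℝ (Fin d), ‖y‖ = 1 → ‖F y‖ ≤ L₂)
    (x x' : EuclideanSpace ℝ (Fin d)) (hx : ‖x‖ = 1) (hx' : ‖x'‖ = 1)
    (v v' : Fin k → EuclideanSpace ℝ (Fin d))
    (hv : Orthonormal ℝ v) (hv' : Orthonormal ℝ v') :
    ‖∑ j, (⟪v j, F x⟫ • v j - ⟪v' j, F x'⟫ • v' j)‖
      ≤ L₂ * ∑ j, (‖v j - v' j‖ * ‖v j‖ + ‖v' j‖ * ‖v j - v' j‖)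
        + L₁ * ‖x - x'‖ :=
  projected_force_stability_general d k L₁ L₂ F hLip hbd x x' hx hx' v v' hv'
end
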